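/- Let $\sigma \in (5/3,2)$, $\alpha > 1$, and let $\Lambda:(0,1) \to \mathbb{R}$ be a measurable function satisfying $0 < \Lambda(z) \le z^{\sigma-2}$ for $z \in (0,1)$. Define $P_\alpha(\theta,\zeta) = \theta^\alpha \int_0^{1-\theta} \Lambda(z)\,(\zeta(1-z) - \theta)^{-\alpha}\,dz$ for $0 < \theta < 1 < \zeta$. Then there is a constant $C$ (depending on $\sigma$ and $\alpha$) such that $0 \le P_\alpha(\theta,\zeta) \le \frac{C\,\theta}{\zeta - \theta}\cdot \frac{(1-\theta)^{\sigma-1}}{(\zeta-1)^{\alpha-1}}$. -/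

import Mathlib

/-!
Bound `Λ(z) ≤ z^{s-1}` with `s = σ - 1 ∈ (0, 1]` and write `ζ(1 - z) - θ = b - a z` with `a = ζ`,
`b = ζ - θ`; this decreases to `m = b - a(1 - θ) = θ(ζ - 1)` at the upper endpoint. Split the
integral at `c = b / (2a)`. On `[0, c]` we have `b - a z ≥ b/2`, so this piece is at most
`2^α b^{-α} (1-θ)^s / s`, and `b^{-α} ≤ m^{1-α} / b` because `m ≤ b`. On `[c, 1 - θ]` the weight is
at most `c^{s-1}` and the kernel integrates to at most `m^{1-α} / (a(α - 1))`; since `a c = b/2`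
this piece is at most `2 (1-θ)^s m^{1-α} / ((α - 1) b)`. Multiplying by `θ^α` gives the claim.
-/

open MeasureTheory Set

lemma intervalIntegral_nonneg_and_le_of_le {f g : ℝ → ℝ} {a b : ℝ} (hab : a ≤ b)
    (hf : AEStronglyMeasurable f (volume.restrict (Ioc a b))) (hg : IntervalIntegrable g volume a b)
    (hfg : ∀ z ∈ Ioc a b, 0 ≤ f z ∧ f z ≤ g z) :
    0 ≤ ∫ z in a..b, f z ∧ ∫ z in a..b, f z ≤ ∫ z in a..b, g z := by
  have hfi : IntervalIntegrable f volume a b := by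
    refine hg.mono_fun' (by rwa [uIoc_of_le hab]) ?_
    rw [uIoc_of_le hab]
    filter_upwards [ae_restrict_mem measurableSet_Ioc] with z hz
    rw [Real.norm_of_nonneg (hfg z hz).1]
    exact (hfg z hz).2
  constructor
  · simpa using intervalIntegral.integral_mono_on_of_le_Ioo hab intervalIntegrable_const hfi
      fun z hz => (hfg z (Ioo_subset_Ioc_self hz)).1
  · exact intervalIntegral.integral_mono_on_of_le_Ioo hab hfi hg
      fun z hz => (hfg z (Ioo_subset_Ioc_self hz)).2

section Kernel

variable {s β a b c L : ℝ}

lemma sub_mul_pos_of_le {z : ℝ} (ha : 0 ≤ a) (hz : z ≤ L) (hm : 0 < b - a * L) :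
    0 < b - a * z := by
  nlinarith [mul_le_mul_of_nonneg_left hz ha]

lemma continuousOn_rpow_sub_mul (ha : 0 ≤ a) (hm : 0 < b - a * L) :
    ContinuousOn (fun z => (b - a * z) ^ β) (Icc c L) :=
  (continuousOn_const.sub (continuousOn_const.mul continuousOn_id)).rpow_const
    fun _ hz => Or.inl (sub_mul_pos_of_le ha hz.2 hm).ne'

lemma intervalIntegrable_rpow_mul_rpow_sub_mul (hs : 0 < s) (ha : 0 ≤ a) (hL : 0 ≤ L)
    (hm : 0 < b - a * L) :
    IntervalIntegrable (fun z => z ^ (s - 1) * (b - a * z) ^ β) volume 0 L :=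
  (intervalIntegral.intervalIntegrable_rpow' (by linarith)).mul_continuousOn
    (by rw [uIcc_of_le hL]; exact continuousOn_rpow_sub_mul ha hm)

lemma integral_rpow_neg_sub_mul_le (hβ : 1 < β) (ha : 0 < a) (hcL : c ≤ L) (hm : 0 < b - a * L) :
    ∫ z in c..L, (b - a * z) ^ (-β) ≤ (b - a * L) ^ (1 - β) / (a * (β - 1)) := by
  have hderiv : ∀ z ∈ uIcc c L, HasDerivAt (fun z => (b - a * z) ^ (1 - β) / (a * (β - 1)))
      ((b - a * z) ^ (-β)) z := by
    intro z hz
    rw [uIcc_of_le hcL] at hz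
    have hlin : HasDerivAt (fun z => b - a * z) (-a) z := by
      simpa using ((hasDerivAt_id z).const_mul a).const_sub b
    refine ((hlin.rpow_const (p := 1 - β)
      (Or.inl (sub_mul_pos_of_le ha.le hz.2 hm).ne')).div_const (a * (β - 1))).congr_deriv ?_
    rw [show 1 - β - 1 = -β by ring]
    field_simp [(sub_pos.2 hβ).ne']
    ring
  rw [intervalIntegral.integral_eq_sub_of_hasDerivAt hderiv
    ((continuousOn_rpow_sub_mul ha.le hm).intervalIntegrable_of_Icc hcL)]
  have hc : 0 ≤ (b - a * c) ^ (1 - β) / (a * (β - 1)) :=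
    div_nonneg (Real.rpow_nonneg (sub_mul_pos_of_le ha.le hcL hm).le _)
      (mul_pos ha (sub_pos.2 hβ)).le
  linarith

lemma integral_rpow_mul_rpow_neg_sub_mul_le_of_two_mul_le (hs : 0 < s) (hβ : 0 ≤ β) (ha : 0 ≤ a)
    (hb : 0 < b) (hL : 0 ≤ L) (hLb : 2 * a * L ≤ b) :
    ∫ z in (0:ℝ)..L, z ^ (s - 1) * (b - a * z) ^ (-β) ≤ 2 ^ β * b ^ (-β) * (L ^ s / s) := by
  have hkernel : ∀ z ∈ Icc 0 L, (b - a * z) ^ (-β) ≤ 2 ^ β * b ^ (-β) := by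
    intro z hz
    have hhalf : b / 2 ≤ b - a * z := by nlinarith [mul_le_mul_of_nonneg_left hz.2 ha]
    calc (b - a * z) ^ (-β) ≤ (b / 2) ^ (-β) :=
          Real.rpow_le_rpow_of_nonpos (by positivity) hhalf (by linarith)
      _ = 2 ^ β * b ^ (-β) := by
          rw [Real.div_rpow hb.le zero_le_two, Real.rpow_neg zero_le_two, div_inv_eq_mul,
            mul_comm]
  calc ∫ z in (0:ℝ)..L, z ^ (s - 1) * (b - a * z) ^ (-β)
      ≤ ∫ z in (0:ℝ)..L, z ^ (s - 1) * (2 ^ β * b ^ (-β)) :=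
        intervalIntegral.integral_mono_on hL
          (intervalIntegrable_rpow_mul_rpow_sub_mul hs ha hL (by linarith))
          ((intervalIntegral.intervalIntegrable_rpow' (by linarith)).mul_const _)
          fun z hz => mul_le_mul_of_nonneg_left (hkernel z hz) (Real.rpow_nonneg hz.1 _)
    _ = 2 ^ β * b ^ (-β) * (L ^ s / s) := by
        rw [intervalIntegral.integral_mul_const, integral_rpow (Or.inl (by linarith)),
          sub_add_cancel, Real.zero_rpow hs.ne', sub_zero, mul_comm]

lemma integral_rpow_mul_rpow_neg_sub_mul_le_of_le (hs : s ≤ 1) (hβ : 1 < β) (ha : 0 < a)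
    (hc : 0 < c) (hcL : c ≤ L) (hm : 0 < b - a * L) :
    ∫ z in c..L, z ^ (s - 1) * (b - a * z) ^ (-β)
      ≤ c ^ (s - 1) * ((b - a * L) ^ (1 - β) / (a * (β - 1))) := by
  have hkernel := continuousOn_rpow_sub_mul (β := -β) (c := c) ha.le hm
  calc ∫ z in c..L, z ^ (s - 1) * (b - a * z) ^ (-β)
      ≤ ∫ z in c..L, c ^ (s - 1) * (b - a * z) ^ (-β) :=
        intervalIntegral.integral_mono_on hcL
          (((continuousOn_id.rpow_const fun z hz => Or.inl (hc.trans_le hz.1).ne').mul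
            hkernel).intervalIntegrable_of_Icc hcL)
          ((hkernel.intervalIntegrable_of_Icc hcL).const_mul _)
          fun z hz => mul_le_mul_of_nonneg_right
            (Real.rpow_le_rpow_of_nonpos hc hz.1 (by linarith))
            (Real.rpow_nonneg (sub_mul_pos_of_le ha.le hz.2 hm).le _)
    _ = c ^ (s - 1) * ∫ z in c..L, (b - a * z) ^ (-β) := intervalIntegral.integral_const_mul _ _
    _ ≤ _ := mul_le_mul_of_nonneg_left (integral_rpow_neg_sub_mul_le hβ ha hcL hm)
        (Real.rpow_nonneg hc.le _)

lemma integral_rpow_mul_rpow_neg_sub_mul_le (hs₀ : 0 < s) (hs₁ : s ≤ 1) (hβ : 1 < β)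
    (ha : 0 < a) (hL : 0 ≤ L) (hm : 0 < b - a * L) :
    ∫ z in (0:ℝ)..L, z ^ (s - 1) * (b - a * z) ^ (-β)
      ≤ (2 ^ β / s + 2 / (β - 1)) * (L ^ s * (b - a * L) ^ (1 - β) / b) := by
  have hb : 0 < b := by nlinarith [mul_nonneg ha.le hL]
  have hβ₁ : 0 < β - 1 := sub_pos.2 hβ
  have hI := intervalIntegrable_rpow_mul_rpow_sub_mul (β := -β) hs₀ ha.le hL hm
  have hnear : ∀ x, 0 ≤ x → x ≤ L → 2 * a * x ≤ b →
      ∫ z in (0:ℝ)..x, z ^ (s - 1) * (b - a * z) ^ (-β)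
        ≤ 2 ^ β / s * (L ^ s * (b - a * L) ^ (1 - β) / b) := by
    intro x hx hxL hxb
    have hpow : b ^ (-β) ≤ (b - a * L) ^ (1 - β) / b := by
      rw [show -β = (1 - β) - 1 by ring, Real.rpow_sub_one hb.ne']
      exact div_le_div_of_nonneg_right
        (Real.rpow_le_rpow_of_nonpos hm (by nlinarith [mul_nonneg ha.le hL]) (by linarith)) hb.le
    calc ∫ z in (0:ℝ)..x, z ^ (s - 1) * (b - a * z) ^ (-β)
        ≤ 2 ^ β * b ^ (-β) * (x ^ s / s) :=
          integral_rpow_mul_rpow_neg_sub_mul_le_of_two_mul_le hs₀ (by linarith) ha.le hb hx hxb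
      _ ≤ 2 ^ β * ((b - a * L) ^ (1 - β) / b) * (L ^ s / s) := by
          gcongr
      _ = _ := by ring
  have hfar_nonneg : 0 ≤ 2 / (β - 1) * (L ^ s * (b - a * L) ^ (1 - β) / b) := by
    have := Real.rpow_nonneg hm.le (1 - β)
    have := Real.rpow_nonneg hL s
    positivity
  rcases le_or_gt (2 * a * L) b with hLb | hbL
  · rw [add_mul]
    exact le_add_of_le_of_nonneg (hnear L hL le_rfl hLb) hfar_nonneg
  set c := b / (2 * a) with hc_def
  have hc : 0 < c := by positivity
  have hcL : c ≤ L := by rw [div_le_iff₀ (by positivity)]; linarith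
  have hac : 2 * a * c = b := by rw [hc_def]; field_simp
  have hfar : c ^ (s - 1) * ((b - a * L) ^ (1 - β) / (a * (β - 1)))
      ≤ 2 / (β - 1) * (L ^ s * (b - a * L) ^ (1 - β) / b) := by
    calc c ^ (s - 1) * ((b - a * L) ^ (1 - β) / (a * (β - 1)))
        = 2 / (β - 1) * (c ^ s * (b - a * L) ^ (1 - β) / b) := by
          rw [Real.rpow_sub_one hc.ne', ← hac]
          field_simp
      _ ≤ 2 / (β - 1) * (L ^ s * (b - a * L) ^ (1 - β) / b) := by
          gcongr
  rw [← intervalIntegral.integral_add_adjacent_intervals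
    (hI.mono_set (by rw [uIcc_of_le hc.le, uIcc_of_le hL]; exact Icc_subset_Icc le_rfl hcL))
    (hI.mono_set (by rw [uIcc_of_le hcL, uIcc_of_le hL]; exact Icc_subset_Icc hc.le le_rfl)),
    add_mul]
  exact add_le_add (hnear c hc.le hcL hac.le)
    ((integral_rpow_mul_rpow_neg_sub_mul_le_of_le hs₁ hβ ha hc hcL hm).trans hfar)

end Kernel

theorem stmt9 (σ α : ℝ) (hσ : σ ∈ Ioo (5/3 : ℝ) 2) (hα : 1 < α)
    (Λ : ℝ → ℝ) (hmeas : Measurable Λ)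
    (hΛ : ∀ z ∈ Ioo (0:ℝ) 1, 0 < Λ z ∧ Λ z ≤ z ^ (σ - 2)) :
    ∃ C > (0:ℝ), ∀ θ ζ : ℝ, 0 < θ → θ < 1 → 1 < ζ →
      0 ≤ θ ^ α * ∫ z in (0:ℝ)..(1 - θ), Λ z * (ζ * (1 - z) - θ) ^ (-α) ∧
      θ ^ α * ∫ z in (0:ℝ)..(1 - θ), Λ z * (ζ * (1 - z) - θ) ^ (-α)
        ≤ C * θ / (ζ - θ) * ((1 - θ) ^ (σ - 1) / (ζ - 1) ^ (α - 1)) := by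
  obtain ⟨hσ₁, hσ₂⟩ := hσ
  have hσ₁' : 0 < σ - 1 := by linarith
  have hα₁ : 0 < α - 1 := by linarith
  refine ⟨2 ^ α / (σ - 1) + 2 / (α - 1),
    by have := Real.rpow_pos_of_pos two_pos α; positivity, fun θ ζ hθ hθ₁ hζ => ?_⟩
  have hL : 0 ≤ 1 - θ := by linarith
  have hm : (ζ - θ) - ζ * (1 - θ) = θ * (ζ - 1) := by ring
  have hm_pos : 0 < (ζ - θ) - ζ * (1 - θ) := by rw [hm]; nlinarith
  obtain ⟨hnonneg, hle⟩ := intervalIntegral_nonneg_and_le_of_le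
    (f := fun z => Λ z * (ζ * (1 - z) - θ) ^ (-α))
    (g := fun z => z ^ (σ - 1 - 1) * ((ζ - θ) - ζ * z) ^ (-α)) hL
    (hmeas.mul (by fun_prop)).aestronglyMeasurable
    (intervalIntegrable_rpow_mul_rpow_sub_mul hσ₁' (by linarith) hL hm_pos)
    fun z hz => by
      obtain ⟨hΛ₀, hΛ₁⟩ := hΛ z ⟨hz.1, by linarith [hz.2]⟩
      have hk : 0 ≤ (ζ * (1 - z) - θ) ^ (-α) := Real.rpow_nonneg (by nlinarith [hz.2]) _
      rw [show σ - 1 - 1 = σ - 2 by ring, show (ζ - θ) - ζ * z = ζ * (1 - z) - θ by ring]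
      exact ⟨mul_nonneg hΛ₀.le hk, mul_le_mul_of_nonneg_right hΛ₁ hk⟩
  have hbound := integral_rpow_mul_rpow_neg_sub_mul_le (s := σ - 1) hσ₁' (by linarith) hα
    (by linarith) hL hm_pos
  rw [hm] at hbound
  have hθα : 0 ≤ θ ^ α := Real.rpow_nonneg hθ.le α
  refine ⟨mul_nonneg hθα hnonneg, ?_⟩
  calc θ ^ α * ∫ z in (0:ℝ)..(1 - θ), Λ z * (ζ * (1 - z) - θ) ^ (-α)
      ≤ θ ^ α * ((2 ^ α / (σ - 1) + 2 / (α - 1))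
          * ((1 - θ) ^ (σ - 1) * (θ * (ζ - 1)) ^ (1 - α) / (ζ - θ))) :=
        mul_le_mul_of_nonneg_left (hle.trans hbound) hθα
    _ = _ := by
        rw [Real.mul_rpow hθ.le (by linarith), show 1 - α = -(α - 1) by ring,
          Real.rpow_neg hθ.le, Real.rpow_neg (by linarith), Real.rpow_sub_one hθ.ne']
        field_simp
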